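/- Suppose R'(0) < 0, r ≥ −F'(0)/R'(0), and the case hypothesis (P4) holds. Then the forward curve x ↦ f(x,r) is strictly decreasing on [0,∞) (the forward curve is inverse). -/

import Mathlib

/-!
Write `g u = F u + r * R u`, so that `f x r = r - g (B x)`. Under (P4) the function `g` is strictly
convex on `[c, 0]` (in case (b) `R` is affine, hence not strictly convex, so `F` is), and
`r ≥ -F'(0)/R'(0)` says exactly `g'(0) ≤ 0`. A strictly convex function whose derivative at the
right end of an interval is nonpositive is strictly decreasing there, and `B` is strictly decreasing
with values in `(c, 0]`, so `x ↦ g (B x)` is strictly increasing.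
-/

open Filter Set

section Convexity

variable {E : Type*} [AddCommGroup E] [Module ℝ E] {s : Set E} {f : E → ℝ}

theorem ConcaveOn.not_strictConvexOn (hf : ConcaveOn ℝ s f) {x y : E} (hx : x ∈ s) (hy : y ∈ s)
    (hxy : x ≠ y) : ¬StrictConvexOn ℝ s f := fun hf' =>
  (hf'.2 hx hy hxy one_half_pos one_half_pos (add_halves 1)).not_ge
    (hf.2 hx hy one_half_pos.le one_half_pos.le (add_halves 1))

theorem StrictConvexOn.const_mul {r : ℝ} (hr : 0 < r) (hf : StrictConvexOn ℝ s f) :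
    StrictConvexOn ℝ s fun x => r * f x := by
  refine ⟨hf.1, fun x hx y hy hxy a b ha hb hab => ?_⟩
  have h := mul_lt_mul_of_pos_left (hf.2 hx hy hxy ha hb hab) hr
  simp only [smul_eq_mul] at h ⊢
  linarith

end Convexity

theorem StrictConvexOn.strictAntiOn_of_deriv_nonpos {S : Set ℝ} {g : ℝ → ℝ} {b : ℝ}
    (hg : StrictConvexOn ℝ S g) (hb : IsGreatest S b) (hgd : ∀ x ∈ S, DifferentiableAt ℝ g x)
    (hg'b : deriv g b ≤ 0) : StrictAntiOn g S := by
  intro x hx y hy hxy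
  have hslope : slope g x y < 0 :=
    calc slope g x y < deriv g y := hg.slope_lt_deriv hx hy hxy (hgd y hy)
      _ ≤ deriv g b := (hg.strictMonoOn_deriv hgd).monotoneOn hy hb.1 (hb.2 hy)
      _ ≤ 0 := hg'b
  rw [slope_def_field, div_neg_iff] at hslope
  rcases hslope with ⟨-, h⟩ | ⟨h, -⟩ <;> linarith

theorem forward_curve_inverse_general
(c : ℝ) (hc : c < 0)
    (F R : ℝ → ℝ) (ε : ℝ) (hε : 0 < ε)
    (hFconv : ConvexOn ℝ (Set.Ioo (c - ε) ε) F)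
    (hRconv : ConvexOn ℝ (Set.Ioo (c - ε) ε) R)
    (hFC1 : ContDiffOn ℝ 1 F (Set.Ioo (c - ε) ε))
    (hRC1 : ContDiffOn ℝ 1 R (Set.Ioo (c - ε) ε))
    (hstrict : StrictConvexOn ℝ (Set.Icc c 0) F ∨ StrictConvexOn ℝ (Set.Icc c 0) R)
    (B : ℝ → ℝ)
    (hBanti : StrictAntiOn B (Set.Ici 0))
    (hBrange : ∀ x ≥ (0:ℝ), B x ∈ Set.Ioc c 0)
    (r : ℝ) (f : ℝ → ℝ → ℝ)
    (hf : ∀ x r', f x r' = -F (B x) - r' * (R (B x) - 1))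
    (hP4 : (0 ≤ r ∧ 0 < deriv F 0) ∨ (∀ u, R u = u / c))
    (hR'0 : deriv R 0 < 0)
    (hr : -(deriv F 0) / deriv R 0 ≤ r) :
    StrictAntiOn (fun x => f x r) (Set.Ici 0) := by
  have hsub : Icc c 0 ⊆ Ioo (c - ε) ε := Icc_subset_Ioo (by linarith) hε
  have hFd : ∀ u ∈ Icc c 0, DifferentiableAt ℝ F u := fun u hu =>
    (hFC1.differentiableOn one_ne_zero).differentiableAt (isOpen_Ioo.mem_nhds (hsub hu))
  have hRd : ∀ u ∈ Icc c 0, DifferentiableAt ℝ R u := fun u hu =>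
    (hRC1.differentiableOn one_ne_zero).differentiableAt (isOpen_Ioo.mem_nhds (hsub hu))
  have hg_strict : StrictConvexOn ℝ (Icc c 0) fun u => F u + r * R u := by
    rcases hP4 with ⟨hr0, hF'0⟩ | hRlin
    · rcases hstrict with hF | hR
      · exact hF.add_convexOn ((hRconv.subset hsub (convex_Icc c 0)).smul hr0)
      · have hrpos : 0 < r := (div_pos_of_neg_of_neg (neg_neg_of_pos hF'0) hR'0).trans_le hr
        exact (hFconv.subset hsub (convex_Icc c 0)).add_strictConvexOn (hR.const_mul hrpos)
    · have hRmul : R = LinearMap.mulLeft ℝ c⁻¹ := by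
        ext u
        simp [hRlin, div_eq_inv_mul]
      have hRconcave : ConcaveOn ℝ (Icc c 0) R := hRmul ▸ LinearMap.concaveOn _ (convex_Icc c 0)
      have hF := hstrict.resolve_right
        (hRconcave.not_strictConvexOn (left_mem_Icc.2 hc.le) (right_mem_Icc.2 hc.le) hc.ne)
      have hrR : (fun u => r * R u) = LinearMap.mulLeft ℝ (r * c⁻¹) := by
        ext u
        simp [hRmul]
      exact hF.add_convexOn (hrR ▸ LinearMap.convexOn _ (convex_Icc c 0))
  have hg'0 : deriv (fun u => F u + r * R u) 0 ≤ 0 := by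
    have h0 : (0 : ℝ) ∈ Icc c 0 := right_mem_Icc.2 hc.le
    rw [deriv_fun_add (hFd 0 h0) ((hRd 0 h0).const_mul r), deriv_const_mul _ (hRd 0 h0)]
    rw [div_le_iff_of_neg hR'0] at hr
    linarith
  have hg_anti := hg_strict.strictAntiOn_of_deriv_nonpos ⟨right_mem_Icc.2 hc.le, fun u hu => hu.2⟩
    (fun u hu => (hFd u hu).add ((hRd u hu).const_mul r)) hg'0
  intro x hx y hy hxy
  have h := hg_anti (Ioc_subset_Icc_self (hBrange y hy)) (Ioc_subset_Icc_self (hBrange x hx))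
    (hBanti hx hy hxy)
  simp only [hf]
  linarith

/-- If `R'(0) < 0`, `r ≥ −F'(0)/R'(0)`, and (P4) holds, then the forward curve
`x ↦ f x r` is strictly decreasing on `[0,∞)` (the forward curve is inverse). -/
theorem forward_curve_inverse
(c : ℝ) (hc : c < 0)
    (F R : ℝ → ℝ) (ε : ℝ) (hε : 0 < ε)
    (hFconv : ConvexOn ℝ (Set.Ioo (c - ε) ε) F)
    (hRconv : ConvexOn ℝ (Set.Ioo (c - ε) ε) R)
    (hFC1 : ContDiffOn ℝ 1 F (Set.Ioo (c - ε) ε))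
    (hRC1 : ContDiffOn ℝ 1 R (Set.Ioo (c - ε) ε))
    (hF0 : F 0 = 0) (hR0 : R 0 = 0) (hRc : R c = 1)
    (hRlt1 : ∀ u ∈ Set.Ioc c 0, R u < 1)
    (hR'c : deriv R c < 0)
    (hFne : ∃ u ∈ Set.Icc c 0, F u ≠ 0)
    (hstrict : StrictConvexOn ℝ (Set.Icc c 0) F ∨ StrictConvexOn ℝ (Set.Icc c 0) R)
    (B : ℝ → ℝ) (hB0 : B 0 = 0)
    (hBode : ∀ x ≥ (0:ℝ), HasDerivAt B (R (B x) - 1) x)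
    (hBanti : StrictAntiOn B (Set.Ici 0))
    (hBrange : ∀ x ≥ (0:ℝ), B x ∈ Set.Ioc c 0)
    (hBlim : Tendsto B atTop (nhds c))
    (r : ℝ) (f : ℝ → ℝ → ℝ)
    (hf : ∀ x r', f x r' = -F (B x) - r' * (R (B x) - 1))
    (hP4 : (0 ≤ r ∧ 0 < deriv F 0) ∨ (∀ u, R u = u / c))
    (hR'0 : deriv R 0 < 0)
    (hr : -(deriv F 0) / deriv R 0 ≤ r) :
    StrictAntiOn (fun x => f x r) (Set.Ici 0) :=
  forward_curve_inverse_general c hc F R ε hε hFconv hRconv hFC1 hRC1 hstrict B hBanti hBrange r f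
    hf hP4 hR'0 hr
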